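/- Let (𝒜, V, ℛ) be a crystallographic arrangement of rank r, K a chamber, and m ∈ ℕ such that Vol₂(α, β) ≤ m for all distinct α, β ∈ R^K_+. Then |R^K_+| ≤ (m+1)^r. -/

import Mathlib

open Set

noncomputable section

abbrev Vr (r : ℕ) := Fin r → ℝ
abbrev DualV (r : ℕ) := Module.Dual ℝ (Vr r)

/-- The complement of the union of the hyperplanes of the arrangement. -/
def ArrComplement {r : ℕ} (A : Set (Submodule ℝ (Vr r))) : Set (Vr r) :=
  {v | ∀ H ∈ A, v ∉ H}

/-- A chamber is a connected component of the complement. -/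
def IsChamber {r : ℕ} (A : Set (Submodule ℝ (Vr r))) (K : Set (Vr r)) : Prop :=
  ∃ x ∈ ArrComplement A, K = connectedComponentIn (ArrComplement A) x

/-- The open simplicial cone spanned by a family of vectors. -/
def OpenCone {r : ℕ} (b : Fin r → Vr r) : Set (Vr r) :=
  {v | ∃ a : Fin r → ℝ, (∀ i, 0 < a i) ∧ v = ∑ i, a i • b i}

/-- A linear hyperplane: the kernel of a nonzero linear form. -/
def IsHyperplane {r : ℕ} (H : Submodule ℝ (Vr r)) : Prop :=
  ∃ f : DualV r, f ≠ 0 ∧ H = LinearMap.ker f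

/-- A simplicial arrangement: a finite set of linear hyperplanes all of whose
chambers are open simplicial cones. -/
def IsSimplicial {r : ℕ} (A : Set (Submodule ℝ (Vr r))) : Prop :=
  A.Finite ∧ (∀ H ∈ A, IsHyperplane H) ∧
    ∀ K, IsChamber A K → ∃ b : Fin r → Vr r, LinearIndependent ℝ b ∧ K = OpenCone b

/-- The walls of a chamber `K`: elements of `R` that are nonnegative on `K` and whose
kernel intersected with the closure of `K` spans the kernel. -/
def Walls {r : ℕ} (R : Set (DualV r)) (K : Set (Vr r)) : Set (DualV r) :=
  {α | α ∈ R ∧ (∀ x ∈ K, 0 ≤ α x) ∧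
    Submodule.span ℝ ((LinearMap.ker α : Set (Vr r)) ∩ closure K) = LinearMap.ker α}

/-- A crystallographic arrangement `(𝒜, V, ℛ)`. -/
def IsCrystArr {r : ℕ} (A : Set (Submodule ℝ (Vr r))) (R : Set (DualV r)) : Prop :=
  R.Finite ∧ IsSimplicial A ∧ A = (fun α => LinearMap.ker α) '' R ∧
    (∀ α ∈ R, {β | ∃ c : ℝ, β = c • α} ∩ R = {α, -α}) ∧
    ∀ K, IsChamber A K → ∀ α ∈ R, α ∈ Submodule.span ℤ (Walls R K)

/-- `w` is an ordered enumeration of the walls of the chamber `K`. -/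
def IsWallBasis {r : ℕ} (R : Set (DualV r)) (K : Set (Vr r)) (w : Fin r → DualV r) : Prop :=
  Function.Injective w ∧ Set.range w = Walls R K

/-- The roots of `R` at a chamber, in integer coordinates with respect to
the wall basis `w`. -/
def RootsAt {r : ℕ} (R : Set (DualV r)) (w : Fin r → DualV r) : Set (Fin r → ℤ) :=
  {c | (∑ i, (c i : ℝ) • w i) ∈ R}

/-- The positive roots at a chamber. -/
def PosRootsAt {r : ℕ} (R : Set (DualV r)) (w : Fin r → DualV r) : Set (Fin r → ℤ) :=
  {c ∈ RootsAt R w | ∀ i, 0 ≤ c i}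

/-- The Cartan matrix entry of a root set (in coordinates):
`c_{ii} = 2` and `c_{ij} = -max {k ∈ ℕ₀ | k·αᵢ + α_j ∈ Rts}` for `i ≠ j`. -/
def cartanEntry {r : ℕ} (Rts : Set (Fin r → ℤ)) (i j : Fin r) : ℤ :=
  if i = j then 2
  else -(sSup {k : ℤ | 0 ≤ k ∧ k • Pi.single i 1 + Pi.single j 1 ∈ Rts})

/-- Irreducibility: the arrangement is not a nontrivial product. -/
def IsIrredArr {r : ℕ} (A : Set (Submodule ℝ (Vr r))) : Prop :=
  ¬ ∃ W₁ W₂ : Submodule ℝ (Vr r), IsCompl W₁ W₂ ∧ W₁ ≠ ⊥ ∧ W₂ ≠ ⊥ ∧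
      ∀ H ∈ A, W₁ ≤ H ∨ W₂ ≤ H

/-- `Vol m` of `m` integer vectors: the product of the elementary divisors of the
matrix with these columns, i.e. the gcd of all maximal minors. -/
def Vol {r : ℕ} (m : ℕ) (v : Fin m → (Fin r → ℤ)) : ℤ :=
  Finset.univ.gcd fun f : Fin m → Fin r => (Matrix.of fun i j => v j (f i)).det

lemma zero_not_mem_R {r : ℕ} {A : Set (Submodule ℝ (Vr r))} {R : Set (DualV r)}
    (h : IsCrystArr A R) : (0 : DualV r) ∉ R := by
  intro h0
  have hA : (⊤ : Submodule ℝ (Vr r)) ∈ A := by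
    rw [h.2.2.1]
    exact ⟨0, h0, by simp⟩
  obtain ⟨f, hf, hker⟩ := h.2.1.2.1 _ hA
  exact hf (LinearMap.ker_eq_top.mp hker.symm)


lemma walls_linearIndependent {r : ℕ} {A : Set (Submodule ℝ (Vr r))} {R : Set (DualV r)}
    {K : Set (Vr r)} {w : Fin r → DualV r}
    (h : IsCrystArr A R) (hK : IsChamber A K) (hw : IsWallBasis R K w) :
    LinearIndependent ℝ w := by
  rcases isEmpty_or_nonempty (Fin r) with hE | hNE
  · exact linearIndependent_empty_type
  obtain ⟨b, hb, hKb⟩ := h.2.1.2.2 K hK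
  have hcard : Fintype.card (Fin r) = Module.finrank ℝ (Vr r) := by simp
  let B : Module.Basis (Fin r) ℝ (Vr r) := basisOfLinearIndependentOfCardEqFinrank hb hcard
  have hbB : ⇑B = b := by
    funext i
    simp [B, coe_basisOfLinearIndependentOfCardEqFinrank]
  rw [← hbB] at hKb
  clear_value B
  -- closure K has nonnegative coordinates
  have hclos : closure K ⊆ {v | ∀ i, 0 ≤ B.repr v i} := by
    have hcl : IsClosed {v : Vr r | ∀ i, 0 ≤ B.repr v i} := by
      have heq : {v : Vr r | ∀ i, 0 ≤ B.repr v i} = ⋂ i, (B.coord i) ⁻¹' (Set.Ici 0) := by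
        ext v
        simp [Module.Basis.coord_apply, Set.mem_iInter]
      rw [heq]
      exact isClosed_iInter fun i =>
        (isClosed_Ici).preimage (LinearMap.continuous_of_finiteDimensional _)
    refine closure_minimal ?_ hcl
    rw [hKb]
    rintro v ⟨a, ha, rfl⟩ i
    rw [B.repr_sum_self]
    exact (ha i).le
  -- walls are nonnegative on the basis
  have hwall : ∀ α ∈ Walls R K, ∀ i, 0 ≤ α (B i) := by
    rintro α ⟨hαR, hpos, hspan⟩ i
    have key : ∀ ε : ℝ, 0 < ε → 0 ≤ α (B i) + ε * α (∑ j, B j) := by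
      intro ε hε
      have hmem : B i + ε • (∑ j, B j) ∈ K := by
        rw [hKb]
        refine ⟨fun k => ε + if k = i then 1 else 0, fun k => ?_, ?_⟩
        · dsimp only
          have : (0:ℝ) ≤ if k = i then 1 else 0 := by split <;> norm_num
          linarith
        · simp only [add_smul, Finset.sum_add_distrib, ite_smul, one_smul, zero_smul]
          rw [Finset.sum_ite_eq' Finset.univ i (fun k => B k)]
          simp [Finset.smul_sum, add_comm]
      have h1 := hpos _ hmem
      simpa [map_add, map_smul, smul_eq_mul] using h1
    by_contra hneg
    push_neg at hneg
    set C := α (∑ j, B j) with hC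
    rcases le_or_gt C 0 with hC0 | hC0
    · have h1 := key 1 one_pos
      nlinarith
    · have hε : 0 < -(α (B i)) / (2 * C) := div_pos (by linarith) (by linarith)
      have h1 := key _ hε
      have h2 : (-(α (B i)) / (2*C)) * C = -(α (B i))/2 := by field_simp
      nlinarith
  -- kernel of a wall is spanned by basis vectors on which it vanishes
  have hker : ∀ α ∈ Walls R K,
      LinearMap.ker α ≤ Submodule.span ℝ (B '' {i | α (B i) = 0}) := by
    rintro α hα
    obtain ⟨hαR, hpos, hspan⟩ := hα
    rw [← hspan]
    refine Submodule.span_le.mpr ?_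
    rintro x ⟨hx1, hx2⟩
    have hc := hclos hx2
    have hx : x = ∑ i, B.repr x i • B i := (B.sum_repr x).symm
    have hαx : ∑ i, B.repr x i * α (B i) = 0 := by
      have hx0 : α x = 0 := hx1
      calc ∑ i, B.repr x i * α (B i) = α (∑ i, B.repr x i • B i) := by
            simp only [map_sum, map_smul, smul_eq_mul]
        _ = 0 := by rw [← hx, hx0]
    have hterm : ∀ i ∈ Finset.univ, B.repr x i * α (B i) = 0 :=
      (Finset.sum_eq_zero_iff_of_nonneg fun i _ =>
        mul_nonneg (hc i) (hwall α ⟨hαR, hpos, hspan⟩ i)).mp hαx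
    rw [hx]
    refine Submodule.sum_mem _ fun i _ => ?_
    rcases mul_eq_zero.mp (hterm i (Finset.mem_univ i)) with h0 | h0
    · rw [h0, zero_smul]; exact Submodule.zero_mem _
    · exact Submodule.smul_mem _ _ (Submodule.subset_span ⟨i, h0, rfl⟩)
  -- each wall is nonzero on at most one basis vector
  have huniq : ∀ α ∈ Walls R K, ∀ i j, α (B i) ≠ 0 → α (B j) ≠ 0 → i = j := by
    intro α hα i j hi hj
    by_contra hij
    set v := α (B j) • B i - α (B i) • B j with hv
    have hvker : v ∈ LinearMap.ker α := by
      simp only [LinearMap.mem_ker, hv, map_sub, map_smul, smul_eq_mul]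
      ring
    have hvs := hker α hα hvker
    have hsup := (Module.Basis.mem_span_image B).mp hvs
    have hvi : B.repr v i = α (B j) := by
      simp [hv, map_sub, Finsupp.single_apply, Ne.symm hij]
    have hmem : i ∈ (B.repr v).support := Finsupp.mem_support_iff.mpr (by rw [hvi]; exact hj)
    exact hi (hsup hmem)
  -- each wall is nonzero on at least one basis vector
  have hex : ∀ α ∈ Walls R K, ∃ i, α (B i) ≠ 0 := by
    intro α hα
    by_contra hno
    push_neg at hno
    have hz : α = 0 := B.ext fun i => by simp [hno i]
    exact zero_not_mem_R h (hz ▸ hα.1)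
  have hwj : ∀ j, w j ∈ Walls R K := fun j => hw.2 ▸ Set.mem_range_self j
  choose σ hσ using fun j => hex (w j) (hwj j)
  have hvanish : ∀ j k, k ≠ σ j → w j (B k) = 0 := by
    intro j k hk
    by_contra h0
    exact hk (huniq _ (hwj j) k (σ j) h0 (hσ j))
  have hσinj : Function.Injective σ := by
    intro j1 j2 hj
    have ht2 : w j2 (B (σ j2)) ≠ 0 := hσ j2
    have hcw : w j1 = (w j1 (B (σ j2)) / w j2 (B (σ j2))) • w j2 := by
      apply B.ext
      intro i
      by_cases hi : i = σ j2
      · subst hi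
        rw [LinearMap.smul_apply, smul_eq_mul]
        field_simp
      · have h1 : w j1 (B i) = 0 := hvanish j1 i (by rw [hj]; exact hi)
        have h2 : w j2 (B i) = 0 := hvanish j2 i hi
        simp [h1, h2]
    have hmem : w j1 ∈ ({β | ∃ c : ℝ, β = c • w j2} ∩ R) := ⟨⟨_, hcw⟩, (hwj j1).1⟩
    rw [h.2.2.2.1 (w j2) (hwj j2).1] at hmem
    simp only [Set.mem_insert_iff, Set.mem_singleton_iff] at hmem
    rcases hmem with h1 | h1
    · exact hw.1 h1
    · exfalso
      have e1 : w j1 (B (σ j2)) = - w j2 (B (σ j2)) := by rw [h1]; simp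
      have hp1 : 0 ≤ w j1 (B (σ j2)) := hwall _ (hwj j1) (σ j2)
      have hp2 : 0 ≤ w j2 (B (σ j2)) := hwall _ (hwj j2) (σ j2)
      have h2pos : 0 < w j2 (B (σ j2)) := lt_of_le_of_ne hp2 (Ne.symm ht2)
      linarith
  refine Fintype.linearIndependent_iff.mpr fun g hg j => ?_
  have h0 := LinearMap.congr_fun hg (B (σ j))
  simp only [LinearMap.coe_sum, Finset.sum_apply, LinearMap.smul_apply, smul_eq_mul,
    LinearMap.zero_apply] at h0
  rw [Finset.sum_eq_single j (fun i _ hi => by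
    rw [hvanish i (σ j) (fun e => hi (hσinj e.symm)), mul_zero]) (fun hj => absurd (Finset.mem_univ j) hj)] at h0
  exact (mul_eq_zero.mp h0).resolve_right (hσ j)


/-- (From the proof of the main theorem): if `Vol₂(α, β) ≤ m` for all distinct positive
roots at a chamber `K`, then there are at most `(m+1)^r` positive roots. -/
theorem stmt18 {r : ℕ} (A : Set (Submodule ℝ (Vr r))) (R : Set (DualV r))
    (h : IsCrystArr A R) (K : Set (Vr r)) (hK : IsChamber A K)
    (w : Fin r → DualV r) (hw : IsWallBasis R K w) (m : ℕ)
    (hm : ∀ a ∈ PosRootsAt R w, ∀ b ∈ PosRootsAt R w, a ≠ b → Vol 2 ![a, b] ≤ (m : ℤ)) :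
    (PosRootsAt R w).ncard ≤ (m + 1) ^ r := by
  have hind := walls_linearIndependent h hK hw
  have h0R := zero_not_mem_R h
  haveI : NeZero (m + 1) := ⟨Nat.succ_ne_zero m⟩
  set F : (Fin r → ℤ) → (Fin r → ZMod (m + 1)) := fun c i => ((c i : ZMod (m + 1))) with hF
  have hinj : Set.InjOn F (PosRootsAt R w) := by
    intro a ha b hb hab
    by_contra hne
    have hdvd : ∀ i, ((m : ℤ) + 1) ∣ (b i - a i) := by
      intro i
      have h1 : ((a i : ZMod (m + 1))) = (b i : ZMod (m + 1)) := congrFun hab i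
      have h2 := (ZMod.intCast_eq_intCast_iff _ _ _).mp h1
      have h3 := Int.ModEq.dvd h2
      simpa using h3
    have hdet : ∀ f : Fin 2 → Fin r,
        (Matrix.of fun i j => ![a, b] j (f i)).det
          = a (f 0) * b (f 1) - b (f 0) * a (f 1) := by
      intro f
      rw [Matrix.det_fin_two]
      simp [Matrix.of_apply]
    have hdvdall : ∀ f : Fin 2 → Fin r,
        ((m : ℤ) + 1) ∣ (Matrix.of fun i j => ![a, b] j (f i)).det := by
      intro f
      rw [hdet f, show a (f 0) * b (f 1) - b (f 0) * a (f 1)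
          = a (f 0) * (b (f 1) - a (f 1)) - a (f 1) * (b (f 0) - a (f 0)) by ring]
      exact dvd_sub ((hdvd (f 1)).mul_left _) ((hdvd (f 0)).mul_left _)
    have hVd : ((m : ℤ) + 1) ∣ Vol 2 ![a, b] := by
      rw [Vol]
      exact Finset.dvd_gcd fun f _ => hdvdall f
    have hV0 : 0 ≤ Vol 2 ![a, b] := by
      have h1 : normalize (Vol 2 ![a, b]) = Vol 2 ![a, b] := by
        rw [Vol]; exact Finset.normalize_gcd
      rw [← Int.abs_eq_normalize] at h1
      rw [← h1]
      exact abs_nonneg _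
    have hVm := hm a ha b hb hne
    have hVz : Vol 2 ![a, b] = 0 := by
      by_contra hVz
      have hpos : 0 < Vol 2 ![a, b] := lt_of_le_of_ne hV0 (Ne.symm hVz)
      have := Int.le_of_dvd hpos hVd
      linarith
    have hdets : ∀ f : Fin 2 → Fin r, a (f 0) * b (f 1) - b (f 0) * a (f 1) = 0 := by
      intro f
      rw [← hdet f]
      rw [Vol] at hVz
      exact Finset.gcd_eq_zero_iff.mp hVz f (Finset.mem_univ f)
    have hminor : ∀ i j : Fin r, a i * b j - b i * a j = 0 := by
      intro i j
      have h1 := hdets ![i, j]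
      simpa using h1
    have haR : (∑ i, (a i : ℝ) • w i) ∈ R := ha.1
    have hbR : (∑ i, (b i : ℝ) • w i) ∈ R := hb.1
    have ha0 : a ≠ 0 := by
      rintro rfl
      apply h0R
      simpa using haR
    obtain ⟨i0, hi0⟩ := Function.ne_iff.mp ha0
    have hi0' : a i0 ≠ 0 := hi0
    have hai : ((a i0 : ℝ)) ≠ 0 := Int.cast_ne_zero.mpr hi0'
    have hprop : ∀ j, (b j : ℝ) = ((b i0 : ℝ) / (a i0 : ℝ)) * (a j : ℝ) := by
      intro j
      have h1 : a i0 * b j = b i0 * a j := by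
        have := hminor i0 j; linarith
      have hcast : ((a i0 : ℝ)) * (b j : ℝ) = (b i0 : ℝ) * (a j : ℝ) := by
        exact_mod_cast congrArg (fun z : ℤ => (z : ℝ)) h1
      field_simp
      linear_combination hcast
    have hβ : (∑ i, (b i : ℝ) • w i)
        = ((b i0 : ℝ) / (a i0 : ℝ)) • (∑ i, (a i : ℝ) • w i) := by
      rw [Finset.smul_sum]
      refine Finset.sum_congr rfl fun j _ => ?_
      rw [smul_smul, ← hprop j]
    have hmem : (∑ i, (b i : ℝ) • w i)
        ∈ ({β | ∃ c : ℝ, β = c • (∑ i, (a i : ℝ) • w i)} ∩ R) := ⟨⟨_, hβ⟩, hbR⟩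
    rw [h.2.2.2.1 _ haR] at hmem
    simp only [Set.mem_insert_iff, Set.mem_singleton_iff] at hmem
    rcases hmem with h1 | h1
    · -- equal case
      have hz : ∑ i, ((b i : ℝ) - (a i : ℝ)) • w i = 0 := by
        have e : ∀ i : Fin r, ((b i : ℝ) - (a i : ℝ)) • w i
            = (b i : ℝ) • w i - (a i : ℝ) • w i := fun i => sub_smul ((b i : ℝ)) ((a i : ℝ)) (w i)
        rw [Finset.sum_congr rfl fun i _ => e i, Finset.sum_sub_distrib, h1, sub_self]
      have hco := Fintype.linearIndependent_iff.mp hind _ hz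
      apply hne
      funext i
      have := hco i
      have : ((b i : ℝ)) = (a i : ℝ) := by linarith [hco i]
      exact_mod_cast this.symm
    · -- negative case
      have hz : ∑ i, ((b i : ℝ) + (a i : ℝ)) • w i = 0 := by
        have e : ∀ i : Fin r, ((b i : ℝ) + (a i : ℝ)) • w i
            = (b i : ℝ) • w i + (a i : ℝ) • w i := fun i => add_smul ((b i : ℝ)) ((a i : ℝ)) (w i)
        rw [Finset.sum_congr rfl fun i _ => e i, Finset.sum_add_distrib, h1]
        simp
      have hco := Fintype.linearIndependent_iff.mp hind _ hz
      apply hne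
      funext i
      have hbi : ((b i : ℝ)) = -(a i : ℝ) := by linarith [hco i]
      have hbi' : b i = -a i := by exact_mod_cast hbi
      have h2 := ha.2 i
      have h3 := hb.2 i
      omega
  calc (PosRootsAt R w).ncard = (F '' (PosRootsAt R w)).ncard :=
        (Set.ncard_image_of_injOn hinj).symm
    _ ≤ (Set.univ : Set (Fin r → ZMod (m + 1))).ncard :=
        Set.ncard_le_ncard (Set.subset_univ _) Set.finite_univ
    _ = (m + 1) ^ r := by
        rw [Set.ncard_univ, Nat.card_eq_fintype_card, Fintype.card_fun]
        simp [ZMod.card]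


end
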